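/- Lemma 3 (monotone formulas): let φ be a negation-free MDL formula, let t ∈ AP be a fixed atomic proposition, and let φ^t be the formula obtained from φ by replacing every dependence atom and every atomic proposition occurrence with t. Then φ is satisfiable if and only if φ^t is satisfiable. -/

import Mathlib

/-- Formulas of modal dependence logic over atomic propositions `AP`.
Negation occurs only in front of atoms (`natom`) and dependence atoms (`ndep`).
`dep ps q` is the dependence atom dep(p₁,…,p_{n-1};p_n) with `ps` the list
p₁,…,p_{n-1} and `q = p_n`.  `or` is dependence disjunction ∨ and
`cor` is classical disjunction ⊘. -/
inductive MDL (AP : Type) : Type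
  | top : MDL AP
  | bot : MDL AP
  | atom : AP → MDL AP
  | natom : AP → MDL AP
  | dep : List AP → AP → MDL AP
  | ndep : List AP → AP → MDL AP
  | and : MDL AP → MDL AP → MDL AP
  | or : MDL AP → MDL AP → MDL AP
  | cor : MDL AP → MDL AP → MDL AP
  | box : MDL AP → MDL AP
  | dia : MDL AP → MDL AP

/-- A Kripke frame `W = (S, R, π)`. -/
structure Frame (AP : Type) where
  S : Type
  R : S → S → Prop
  pi : S → Set AP

/-- Team semantics of MDL: `sat W φ T` means `W, T ⊨ φ`. -/
def sat {AP : Type} (W : Frame AP) : MDL AP → Set W.S → Prop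
  | .top, _ => True
  | .bot, T => T = ∅
  | .atom p, T => ∀ s ∈ T, p ∈ W.pi s
  | .natom p, T => ∀ s ∈ T, p ∉ W.pi s
  | .dep ps q, T => ∀ s₁ ∈ T, ∀ s₂ ∈ T,
      (∀ p ∈ ps, (p ∈ W.pi s₁ ↔ p ∈ W.pi s₂)) → (q ∈ W.pi s₁ ↔ q ∈ W.pi s₂)
  | .ndep _ _, T => T = ∅
  | .and φ ψ, T => sat W φ T ∧ sat W ψ T
  | .or φ ψ, T => ∃ T₁ T₂, T = T₁ ∪ T₂ ∧ sat W φ T₁ ∧ sat W ψ T₂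
  | .cor φ ψ, T => sat W φ T ∨ sat W ψ T
  | .box φ, T => sat W φ {s' | ∃ s ∈ T, W.R s s'}
  | .dia φ, T => ∃ T' : Set W.S, sat W φ T' ∧ ∀ s ∈ T, ∃ s' ∈ T', W.R s s'

/-- A formula is satisfiable iff some frame and nonempty team satisfy it. -/
def satisfiable {AP : Type} (φ : MDL AP) : Prop :=
  ∃ (W : Frame AP) (T : Set W.S), T.Nonempty ∧ sat W φ T

/-- A formula is negation-free if it contains no ¬p and no ¬dep(…;…). -/
def negFree {AP : Type} : MDL AP → Prop
  | .natom _ => False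
  | .ndep _ _ => False
  | .and φ ψ => negFree φ ∧ negFree ψ
  | .or φ ψ => negFree φ ∧ negFree ψ
  | .cor φ ψ => negFree φ ∧ negFree ψ
  | .box φ => negFree φ
  | .dia φ => negFree φ
  | _ => True

/-- Replace every dependence atom and every atomic proposition occurrence by `t`. -/
def subT {AP : Type} (t : AP) : MDL AP → MDL AP
  | .top => .top
  | .bot => .bot
  | .atom _ => .atom t
  | .natom _ => .natom t
  | .dep _ _ => .atom t
  | .ndep _ _ => .natom t
  | .and φ ψ => .and (subT t φ) (subT t ψ)
  | .or φ ψ => .or (subT t φ) (subT t ψ)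
  | .cor φ ψ => .cor (subT t φ) (subT t ψ)
  | .box φ => .box (subT t φ)
  | .dia φ => .dia (subT t φ)

/-!
Atoms and dependence atoms are the only places where the valuation matters. Giving every world
the full valuation makes all of them true on every team, and for negation-free formulas this can
only help. In that frame a formula and its substitution instance `subT t φ` hold on the same teams,
so a satisfying team for either formula is a satisfying team for the other.
-/

namespace Frame

variable {AP : Type}

def full (W : Frame AP) : Frame AP :=
  ⟨W.S, W.R, fun _ => Set.univ⟩

lemma full_pi (W : Frame AP) (s : W.full.S) : W.full.pi s = Set.univ := rfl

end Frame

section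

variable {AP : Type}

lemma negFree_subT (t : AP) {φ : MDL AP} (hφ : negFree φ) : negFree (subT t φ) := by
  induction φ with
  | and _ _ ih₁ ih₂ | or _ _ ih₁ ih₂ | cor _ _ ih₁ ih₂ => exact ⟨ih₁ hφ.1, ih₂ hφ.2⟩
  | box _ ih | dia _ ih => exact ih hφ
  | _ => exact hφ

lemma sat_full_of_sat (W : Frame AP) {φ : MDL AP} (hφ : negFree φ) {T : Set W.S}
    (h : sat W φ T) : sat W.full φ T := by
  induction φ generalizing T with
  | top | bot => exact h
  | atom _ | dep _ _ => simp [sat, Frame.full]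
  | natom _ | ndep _ _ => exact hφ.elim
  | and _ _ ih₁ ih₂ => exact ⟨ih₁ hφ.1 h.1, ih₂ hφ.2 h.2⟩
  | or _ _ ih₁ ih₂ =>
    obtain ⟨T₁, T₂, rfl, h₁, h₂⟩ := h
    exact ⟨T₁, T₂, rfl, ih₁ hφ.1 h₁, ih₂ hφ.2 h₂⟩
  | cor _ _ ih₁ ih₂ => exact h.imp (ih₁ hφ.1) (ih₂ hφ.2)
  | box _ ih => exact ih hφ h
  | dia _ ih =>
    obtain ⟨T', h', hR⟩ := h
    exact ⟨T', ih hφ h', hR⟩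

lemma sat_subT_iff_of_pi_eq_univ {W : Frame AP} (hW : ∀ s, W.pi s = Set.univ) (t : AP)
    (φ : MDL AP) (T : Set W.S) : sat W (subT t φ) T ↔ sat W φ T := by
  induction φ generalizing T with
  | top | bot | atom _ | natom _ | dep _ _ => simp [sat, subT, hW]
  | ndep _ _ => simp [sat, subT, hW, Set.eq_empty_iff_forall_notMem]
  | and _ _ ih₁ ih₂ => exact and_congr (ih₁ T) (ih₂ T)
  | cor _ _ ih₁ ih₂ => exact or_congr (ih₁ T) (ih₂ T)
  | or _ _ ih₁ ih₂ =>
    exact exists₂_congr fun T₁ T₂ => and_congr_right' (and_congr (ih₁ T₁) (ih₂ T₂))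
  | box _ ih => exact ih _
  | dia _ ih => exact exists_congr fun T' => and_congr_left' (ih T')

end

/-- Lemma 3 (monotone formulas). -/
theorem monotone_subst_sat {AP : Type} (φ : MDL AP) (t : AP) (hφ : negFree φ) :
    satisfiable φ ↔ satisfiable (subT t φ) := by
  constructor
  · rintro ⟨W, T, hT, h⟩
    have h_full : sat W.full φ T := sat_full_of_sat W hφ h
    exact ⟨W.full, T, hT, (sat_subT_iff_of_pi_eq_univ W.full_pi t φ T).2 h_full⟩
  · rintro ⟨W, T, hT, h⟩
    have h_full : sat W.full (subT t φ) T := sat_full_of_sat W (negFree_subT t hφ) h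
    exact ⟨W.full, T, hT, (sat_subT_iff_of_pi_eq_univ W.full_pi t φ T).1 h_full⟩
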